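/- arXiv:1201.6272 — 2 statements merged into one kernel-verified Lean document; each statement's English description precedes it below -/
import Mathlib

section
/- Let C be a cartesian category satisfying axioms (G) and (Fct). For any binary relation given by a jointly monic pair m₁ : M ⟶ X, m₂ : M ⟶ Y there exists a monomorphism e : E ⟶ X such that for every element x of X: x ∈ e if and only if there exists an element y of Y with (x,y) ∈ (m₁,m₂). -/
open CategoryTheory CategoryTheory.Limits

namespace CETCS

universe v u

variable {C : Type u} [Category.{v} C] [HasTerminal C]

/-- A morphism is onto if every (global) element of the codomain is hit. -/
def Onto {A B : C} (f : A ⟶ B) : Prop :=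
  ∀ y : ⊤_ C ⟶ B, ∃ x : ⊤_ C ⟶ A, x ≫ f = y

/-- Membership `x ∈ m` of an element in (the subobject given by) a morphism. -/
def Mem {M X : C} (m : M ⟶ X) (x : ⊤_ C ⟶ X) : Prop :=
  ∃ a : ⊤_ C ⟶ M, a ≫ m = x

/-- Membership `(x, y) ∈ (r₁, r₂)` for a binary relation. -/
def Mem2 {R X Y : C} (r₁ : R ⟶ X) (r₂ : R ⟶ Y) (x : ⊤_ C ⟶ X) (y : ⊤_ C ⟶ Y) : Prop :=
  ∃ a : ⊤_ C ⟶ R, a ≫ r₁ = x ∧ a ≫ r₂ = y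

/-- Membership `(x, y, z) ∈ (r₁, r₂, r₃)` for a ternary relation. -/
def Mem3 {R X Y Z : C} (r₁ : R ⟶ X) (r₂ : R ⟶ Y) (r₃ : R ⟶ Z)
    (x : ⊤_ C ⟶ X) (y : ⊤_ C ⟶ Y) (z : ⊤_ C ⟶ Z) : Prop :=
  ∃ a : ⊤_ C ⟶ R, a ≫ r₁ = x ∧ a ≫ r₂ = y ∧ a ≫ r₃ = z

/-- Axiom (G): every morphism that is both mono and onto is an isomorphism. -/
def AxiomG (C : Type u) [Category.{v} C] [HasTerminal C] : Prop :=
  ∀ {A B : C} (f : A ⟶ B), Mono f → Onto f → IsIso f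

/-- A pair of morphisms with common domain is jointly monic. -/
def JointlyMonic2 {R X Y : C} (r₁ : R ⟶ X) (r₂ : R ⟶ Y) : Prop :=
  ∀ {U : C} (f g : U ⟶ R), f ≫ r₁ = g ≫ r₁ → f ≫ r₂ = g ≫ r₂ → f = g

/-- A triple of morphisms with common domain is jointly monic. -/
def JointlyMonic3 {R X Y Z : C} (r₁ : R ⟶ X) (r₂ : R ⟶ Y) (r₃ : R ⟶ Z) : Prop :=
  ∀ {U : C} (f g : U ⟶ R), f ≫ r₁ = g ≫ r₁ → f ≫ r₂ = g ≫ r₂ → f ≫ r₃ = g ≫ r₃ → f = g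

/-- Axiom (Fct): every morphism factors as an onto morphism followed by a mono. -/
def AxiomFct (C : Type u) [Category.{v} C] [HasTerminal C] : Prop :=
  ∀ {A B : C} (f : A ⟶ B), ∃ (I : C) (e : A ⟶ I) (i : I ⟶ B), Onto e ∧ Mono i ∧ e ≫ i = f

/-- A morphism is a cover if any mono through which it factors is an isomorphism. -/
def IsCover {A B : C} (f : A ⟶ B) : Prop :=
  ∀ {I : C} (g : A ⟶ I) (m : I ⟶ B), Mono m → g ≫ m = f → IsIso m

/-- A choice object: every onto morphism into it has a section. -/
def ChoiceObject (P : C) : Prop :=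
  ∀ {A : C} (f : A ⟶ P), Onto f → ∃ g : P ⟶ A, g ≫ f = 𝟙 P

/-- Axiom (PA): every object is covered by a choice object. -/
def AxiomPA (C : Type u) [Category.{v} C] [HasTerminal C] : Prop :=
  ∀ A : C, ∃ (P : C) (p : P ⟶ A), ChoiceObject P ∧ Onto p

/-- Axiom (Π): universal dependent products exist. -/
def AxiomPi (C : Type u) [Category.{v} C] [HasTerminal C] : Prop :=
  ∀ {Y X I : C} (g : Y ⟶ X) (f : X ⟶ I),
    ∃ (P F : C) (ev : P ⟶ Y) (π₁ : P ⟶ F) (π₂ : P ⟶ X) (φ : F ⟶ I),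
      ev ≫ g = π₂ ∧ IsPullback π₂ π₁ f φ ∧
      ∀ (i : ⊤_ C ⟶ I) {R : C} (r₁ : R ⟶ X) (r₂ : R ⟶ Y), Mono r₁ →
        (∀ (x : ⊤_ C ⟶ X) (y : ⊤_ C ⟶ Y), Mem2 r₁ r₂ x y → y ≫ g = x ∧ x ≫ f = i) →
        (∀ x : ⊤_ C ⟶ X, x ≫ f = i → ∃ y : ⊤_ C ⟶ Y, Mem2 r₁ r₂ x y) →
        ∃! s : ⊤_ C ⟶ F, s ≫ φ = i ∧
          ∀ (x : ⊤_ C ⟶ X) (y : ⊤_ C ⟶ Y), Mem3 π₁ π₂ ev s x y ↔ Mem2 r₁ r₂ x y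

/-- `i, j` form a binary coproduct (sum) diagram. -/
def IsCoproductDiagram {A B S : C} (i : A ⟶ S) (j : B ⟶ S) : Prop :=
  ∀ {T : C} (f : A ⟶ T) (g : B ⟶ T), ∃! h : S ⟶ T, i ≫ h = f ∧ j ≫ h = g

/-- Axiom (DP): each element of a sum is a member of one of its injections. -/
def AxiomDP (C : Type u) [Category.{v} C] [HasTerminal C] : Prop :=
  ∀ {A B S : C} (i : A ⟶ S) (j : B ⟶ S), IsCoproductDiagram i j →
    ∀ z : ⊤_ C ⟶ S, Mem i z ∨ Mem j z

/-- An equivalence relation: jointly monic and reflexive, symmetric, transitive on elements. -/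
def EquivRelation {R X : C} (r₁ r₂ : R ⟶ X) : Prop :=
  JointlyMonic2 r₁ r₂ ∧
  (∀ x : ⊤_ C ⟶ X, Mem2 r₁ r₂ x x) ∧
  (∀ x y : ⊤_ C ⟶ X, Mem2 r₁ r₂ x y → Mem2 r₁ r₂ y x) ∧
  (∀ x y z : ⊤_ C ⟶ X, Mem2 r₁ r₂ x y → Mem2 r₁ r₂ y z → Mem2 r₁ r₂ x z)

/-- Axiom (Eff): all equivalence relations are effective. -/
def AxiomEff (C : Type u) [Category.{v} C] [HasTerminal C] : Prop :=
  ∀ {R X : C} (r₁ r₂ : R ⟶ X), EquivRelation r₁ r₂ →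
    ∃ (E : C) (e : X ⟶ E), ∀ x₁ x₂ : ⊤_ C ⟶ X, Mem2 r₁ r₂ x₁ x₂ ↔ x₁ ≫ e = x₂ ≫ e

/-- `z : 1 ⟶ N`, `S : N ⟶ N` form a natural numbers object. -/
def IsNNO {N : C} (z : ⊤_ C ⟶ N) (S : N ⟶ N) : Prop :=
  ∀ {A : C} (b : ⊤_ C ⟶ A) (h : A ⟶ A), ∃! f : N ⟶ A, z ≫ f = b ∧ S ≫ f = f ≫ h

/-- A Π-diagram for `g : Y ⟶ X`, `f : X ⟶ I`. -/
def IsPiDiagram {Y X I P F : C} (g : Y ⟶ X) (f : X ⟶ I)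
    (ev : P ⟶ Y) (π₁ : P ⟶ F) (π₂ : P ⟶ X) (φ : F ⟶ I) : Prop :=
  ev ≫ g = π₂ ∧ IsPullback π₂ π₁ f φ

/-- A universal Π-diagram for `g : Y ⟶ X`, `f : X ⟶ I`. -/
def IsUniversalPiDiagram {Y X I P F : C} (g : Y ⟶ X) (f : X ⟶ I)
    (ev : P ⟶ Y) (π₁ : P ⟶ F) (π₂ : P ⟶ X) (φ : F ⟶ I) : Prop :=
  ∀ {P' F' : C} (ev' : P' ⟶ Y) (π₁' : P' ⟶ F') (π₂' : P' ⟶ X) (φ' : F' ⟶ I),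
    IsPiDiagram g f ev' π₁' π₂' φ' →
    ∃! n : F' ⟶ F, φ' = n ≫ φ ∧
      ∀ m : P' ⟶ P, m ≫ π₁ = π₁' ≫ n → m ≫ π₂ = π₂' → m ≫ ev = ev'

/-- Every morphism factors as a cover followed by a mono. -/
def HasCoverMonoFactorizations (C : Type u) [Category.{v} C] [HasTerminal C] : Prop :=
  ∀ {A B : C} (f : A ⟶ B), ∃ (I : C) (e : A ⟶ I) (m : I ⟶ B), IsCover e ∧ Mono m ∧ e ≫ m = f

/-- Covers are stable under pullback. -/
def CoversPullbackStable (C : Type u) [Category.{v} C] [HasTerminal C] : Prop :=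
  ∀ {P A B Z : C} (p : P ⟶ A) (q : P ⟶ B) (f : A ⟶ Z) (g : B ⟶ Z),
    IsPullback p q f g → IsCover f → IsCover q

/-- The terminal object is projective (with respect to covers). -/
def TerminalProjective (C : Type u) [Category.{v} C] [HasTerminal C] : Prop :=
  ∀ {A B : C} (e : A ⟶ B), IsCover e → ∀ h : ⊤_ C ⟶ B, ∃ k : ⊤_ C ⟶ A, k ≫ e = h

/-! The existential image of a relation `(m₁, m₂)` along `X` is the image of `m₁` given by (Fct):
an element of `X` lies in the image of `m₁` exactly when it is the first coordinate of an
element of the relation, and composing with an onto morphism does not change membership. -/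

theorem mem_comp_iff_of_onto {A I B : C} {e : A ⟶ I} (he : Onto e) (i : I ⟶ B)
    (x : ⊤_ C ⟶ B) : Mem (e ≫ i) x ↔ Mem i x := by
  constructor
  · rintro ⟨a, rfl⟩
    exact ⟨a ≫ e, Category.assoc _ _ _⟩
  · rintro ⟨b, rfl⟩
    obtain ⟨a, rfl⟩ := he b
    exact ⟨a, (Category.assoc _ _ _).symm⟩

theorem mem_iff_exists_mem2 {R X Y : C} (r₁ : R ⟶ X) (r₂ : R ⟶ Y) (x : ⊤_ C ⟶ X) :
    Mem r₁ x ↔ ∃ y : ⊤_ C ⟶ Y, Mem2 r₁ r₂ x y :=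
  ⟨fun ⟨a, ha⟩ => ⟨a ≫ r₂, a, ha, rfl⟩, fun ⟨_, a, ha, _⟩ => ⟨a, ha⟩⟩

theorem statement17_general {C : Type u} [Category.{v} C]
    [HasTerminal C]
    (hFct : AxiomFct C)
    {M X Y : C} (m₁ : M ⟶ X) (m₂ : M ⟶ Y) :
    ∃ (E : C) (e : E ⟶ X), Mono e ∧
      ∀ x : ⊤_ C ⟶ X, (Mem e x ↔ ∃ y : ⊤_ C ⟶ Y, Mem2 m₁ m₂ x y) := by
  obtain ⟨I, p, i, hp, hi, rfl⟩ := hFct m₁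
  exact ⟨I, i, hi, fun x => (mem_comp_iff_of_onto hp i x).symm.trans (mem_iff_exists_mem2 _ m₂ x)⟩

/-- (Existential quantification) In a cartesian category satisfying (G) and (Fct), any binary
relation between X and Y has an existential image: a subobject of X whose members are exactly
the x related to some y. -/
theorem statement17 {C : Type u} [Category.{v} C]
    [HasTerminal C] [HasBinaryProducts C] [HasEqualizers C]
    (hG : AxiomG C) (hFct : AxiomFct C)
    {M X Y : C} (m₁ : M ⟶ X) (m₂ : M ⟶ Y) (hjm : JointlyMonic2 m₁ m₂) :
    ∃ (E : C) (e : E ⟶ X), Mono e ∧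
      ∀ x : ⊤_ C ⟶ X, (Mem e x ↔ ∃ y : ⊤_ C ⟶ Y, Mem2 m₁ m₂ x y) :=
  statement17_general hFct m₁ m₂

end CETCS
end

section
/- Let C be a cartesian category satisfying axioms (G) and (Π). For any binary relation given by a jointly monic pair m₁ : M ⟶ X, m₂ : M ⟶ Y there exists a monomorphism a : A ⟶ X such that for every element x of X: x ∈ a if and only if for every element y of Y, (x,y) ∈ (m₁,m₂). -/
open CategoryTheory CategoryTheory.Limits

namespace CETCS

universe v u

variable {C : Type u} [Category.{v} C] [HasTerminal C]

/-!
Apply (Π) to `⟨m₁, m₂⟩ : M ⟶ X ⨯ Y` (mono, as the pair is jointly monic) over the projection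
`X ⨯ Y ⟶ X`, and take `a := φ : F ⟶ X`. An element of `F` over `x` is a section of `M` over the
fibre `{x} × Y`, so every `y` is related to `x`. Conversely, if every `y` is related to `x`, the
fibre relation `{(z, w) | w ↦ z, z over x}` satisfies the hypotheses of (Π), which yields an
element of `F` over `x`; because `⟨m₁, m₂⟩` is mono, every element of `F` over `x` classifies
this same relation, so it is unique. Thus `φ` is injective on elements, and (G), applied to the
diagonal of its kernel pair, makes it a monomorphism.
-/

/-- The universality clause of axiom (Π) for a given Π-diagram. -/
def PiUniversal {Y X I P F : C} (g : Y ⟶ X) (f : X ⟶ I)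
    (ev : P ⟶ Y) (π₁ : P ⟶ F) (π₂ : P ⟶ X) (φ : F ⟶ I) : Prop :=
  ∀ (i : ⊤_ C ⟶ I) {R : C} (r₁ : R ⟶ X) (r₂ : R ⟶ Y), Mono r₁ →
    (∀ (x : ⊤_ C ⟶ X) (y : ⊤_ C ⟶ Y), Mem2 r₁ r₂ x y → y ≫ g = x ∧ x ≫ f = i) →
    (∀ x : ⊤_ C ⟶ X, x ≫ f = i → ∃ y : ⊤_ C ⟶ Y, Mem2 r₁ r₂ x y) →
    ∃! s : ⊤_ C ⟶ F, s ≫ φ = i ∧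
      ∀ (x : ⊤_ C ⟶ X) (y : ⊤_ C ⟶ Y), Mem3 π₁ π₂ ev s x y ↔ Mem2 r₁ r₂ x y

theorem AxiomPi.exists_isPiDiagram_piUniversal (hPi : AxiomPi C) {Y X I : C}
    (g : Y ⟶ X) (f : X ⟶ I) :
    ∃ (P F : C) (ev : P ⟶ Y) (π₁ : P ⟶ F) (π₂ : P ⟶ X) (φ : F ⟶ I),
      IsPiDiagram g f ev π₁ π₂ φ ∧ PiUniversal g f ev π₁ π₂ φ := by
  obtain ⟨P, F, ev, π₁, π₂, φ, hev, hpb, hU⟩ := hPi g f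
  exact ⟨P, F, ev, π₁, π₂, φ, ⟨hev, hpb⟩, hU⟩

/-- (G) makes the diagonal of the kernel pair an isomorphism. -/
theorem mono_of_injective_on_elements (hG : AxiomG C) [HasPullbacks C] {A B : C} (f : A ⟶ B)
    (hf : ∀ a a' : ⊤_ C ⟶ A, a ≫ f = a' ≫ f → a = a') : Mono f := by
  have onto_diagonal : Onto (pullback.diagonal f) := fun t =>
    ⟨t ≫ pullback.fst f f, by
      have hfst_snd : t ≫ pullback.fst f f = t ≫ pullback.snd f f :=
        hf _ _ (by simp [pullback.condition])
      ext <;> simp [hfst_snd]⟩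
  have := hG _ inferInstance onto_diagonal
  exact (pullback.isIso_diagonal_iff f).mp this

theorem exists_mono_mem2_iff_fibre [HasEqualizers C] {Y X I : C} (g : Y ⟶ X) [Mono g]
    (f : X ⟶ I) (i : ⊤_ C ⟶ I) :
    ∃ (R : C) (r₁ : R ⟶ X) (r₂ : R ⟶ Y), Mono r₁ ∧
      ∀ x y, Mem2 r₁ r₂ x y ↔ y ≫ g = x ∧ x ≫ f = i := by
  let ι := equalizer.ι (g ≫ f) (terminal.from Y ≫ i)
  refine ⟨_, ι ≫ g, ι, mono_comp _ _, fun x y => ⟨?_, ?_⟩⟩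
  · rintro ⟨a, rfl, rfl⟩
    refine ⟨by simp, ?_⟩
    rw [Category.assoc, Category.assoc, equalizer.condition, ← Category.assoc,
      ← Category.assoc, terminal.hom_ext (_ ≫ _) (𝟙 _), Category.id_comp]
  · rintro ⟨rfl, hx⟩
    have hy : y ≫ g ≫ f = y ≫ terminal.from Y ≫ i := by
      rw [← Category.assoc, hx, ← Category.assoc, terminal.hom_ext (_ ≫ _) (𝟙 _),
        Category.id_comp]
    exact ⟨equalizer.lift y hy, by simp [ι], by simp [ι]⟩

namespace IsPiDiagram

variable {Y X I P F : C} {g : Y ⟶ X} {f : X ⟶ I} {ev : P ⟶ Y} {π₁ : P ⟶ F} {π₂ : P ⟶ X}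
  {φ : F ⟶ I}

theorem exists_comp_eq_of_comp_eq (hπ : IsPiDiagram g f ev π₁ π₂ φ) (s : ⊤_ C ⟶ F)
    (x : ⊤_ C ⟶ X) (hx : x ≫ f = s ≫ φ) : ∃ y : ⊤_ C ⟶ Y, y ≫ g = x := by
  obtain ⟨hev, hpb⟩ := hπ
  exact ⟨hpb.lift x s hx ≫ ev, by rw [Category.assoc, hev, hpb.lift_fst]⟩

theorem mem3_iff [Mono g] (hπ : IsPiDiagram g f ev π₁ π₂ φ) {s : ⊤_ C ⟶ F} {i : ⊤_ C ⟶ I}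
    (hs : s ≫ φ = i) (x : ⊤_ C ⟶ X) (y : ⊤_ C ⟶ Y) :
    Mem3 π₁ π₂ ev s x y ↔ y ≫ g = x ∧ x ≫ f = i := by
  obtain ⟨hev, hpb⟩ := hπ
  constructor
  · rintro ⟨p, rfl, rfl, rfl⟩
    rw [Category.assoc, hev, Category.assoc, hpb.w, ← Category.assoc, hs]
    exact ⟨rfl, rfl⟩
  · rintro ⟨rfl, hx⟩
    have hxs : (y ≫ g) ≫ f = s ≫ φ := by rw [hx, hs]
    refine ⟨hpb.lift _ s hxs, hpb.lift_snd _ _ _, hpb.lift_fst _ _ _, ?_⟩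
    rw [← cancel_mono g, Category.assoc, hev, hpb.lift_fst]

theorem existsUnique_comp_eq [HasEqualizers C] [Mono g] (hπ : IsPiDiagram g f ev π₁ π₂ φ)
    (hU : PiUniversal g f ev π₁ π₂ φ) (i : ⊤_ C ⟶ I)
    (hi : ∀ x : ⊤_ C ⟶ X, x ≫ f = i → ∃ y : ⊤_ C ⟶ Y, y ≫ g = x) :
    ∃! s : ⊤_ C ⟶ F, s ≫ φ = i := by
  obtain ⟨R, r₁, r₂, hr₁, hr⟩ := exists_mono_mem2_iff_fibre g f i
  obtain ⟨s, ⟨hs, -⟩, hs_unique⟩ := hU i r₁ r₂ hr₁ (fun x y hxy => (hr x y).mp hxy)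
    (fun x hx => (hi x hx).imp fun y hy => (hr x y).mpr ⟨hy, hx⟩)
  exact ⟨s, hs, fun s' hs' =>
    hs_unique s' ⟨hs', fun x y => (hπ.mem3_iff hs' x y).trans (hr x y).symm⟩⟩

end IsPiDiagram

/-- (Universal quantification) In a cartesian category satisfying (G) and (Π), any binary
relation between X and Y has a universal subobject of X whose members are exactly the x related
to every y. -/
theorem statement18 {C : Type u} [Category.{v} C]
    [HasTerminal C] [HasBinaryProducts C] [HasEqualizers C]
    (hG : AxiomG C) (hPi : AxiomPi C)
    {M X Y : C} (m₁ : M ⟶ X) (m₂ : M ⟶ Y) (hjm : JointlyMonic2 m₁ m₂) :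
    ∃ (A : C) (a : A ⟶ X), Mono a ∧
      ∀ x : ⊤_ C ⟶ X, (Mem a x ↔ ∀ y : ⊤_ C ⟶ Y, Mem2 m₁ m₂ x y) := by
  have : Mono (prod.lift m₁ m₂) := ⟨fun u v huv => hjm u v
    (by simpa only [Category.assoc, prod.lift_fst] using huv =≫ prod.fst)
    (by simpa only [Category.assoc, prod.lift_snd] using huv =≫ prod.snd)⟩
  have := hasPullbacks_of_hasBinaryProducts_of_hasEqualizers C
  obtain ⟨P, F, ev, π₁, π₂, φ, hπ, hU⟩ :=
    hPi.exists_isPiDiagram_piUniversal (prod.lift m₁ m₂) (prod.fst : X ⨯ Y ⟶ X)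
  have related_of_mem (s : ⊤_ C ⟶ F) (y : ⊤_ C ⟶ Y) : Mem2 m₁ m₂ (s ≫ φ) y := by
    obtain ⟨c, hc⟩ := hπ.exists_comp_eq_of_comp_eq s (prod.lift (s ≫ φ) y) (prod.lift_fst _ _)
    exact ⟨c, by simpa only [Category.assoc, prod.lift_fst] using hc =≫ prod.fst,
      by simpa only [Category.assoc, prod.lift_snd] using hc =≫ prod.snd⟩
  have existsUnique_of_related (x : ⊤_ C ⟶ X) (hx : ∀ y, Mem2 m₁ m₂ x y) :
      ∃! s : ⊤_ C ⟶ F, s ≫ φ = x := by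
    refine hπ.existsUnique_comp_eq hU x fun z hz => ?_
    obtain ⟨c, hc₁, hc₂⟩ := hx (z ≫ prod.snd)
    exact ⟨c, by ext <;> simp only [Category.assoc, prod.lift_fst, prod.lift_snd, hc₁, hc₂, hz]⟩
  refine ⟨F, φ, mono_of_injective_on_elements hG φ fun s s' h => ?_, fun x => ⟨?_, ?_⟩⟩
  · exact (existsUnique_of_related _ (related_of_mem s)).unique rfl h.symm
  · rintro ⟨s, rfl⟩
    exact related_of_mem s
  · exact fun hx => (existsUnique_of_related x hx).exists

end CETCS
end
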